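/- arXiv:1308.0312 — 2 statements merged into one kernel-verified Lean document; each statement's English description precedes it below -/
import Mathlib

section
/- Let t₁,…,t_{d+1} be positive naturals and let N₁,…,N_{d+1} be naturals with Σ N_j = n. Define iteratively c_i = (1/t_i)(1 - Σ_{j<i} t_j p_j). Then the iterated integral ∫₀^{c₁} dp₁/c₁ ⋯ ∫₀^{c_d} dp_d/c_d of p₁^{N₁}⋯p_d^{N_d} · [t_d(c_d - p_d)]^{n - Σ_{j≤d} N_j} is at least Π_{j=1}^{d} (1/t_j)^{N_j} · multinomial(n; N₁,…,N_d, n - Σ_{j≤d} N_j)⁻¹ · (n+1)^{-d}. -/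
open MeasureTheory

/-- The iterated integral `∫₀^{c₁} dp₁/c₁ ⋯` of the de Finetti construction, written
recursively: at each step the "remaining mass" is `r = 1 - Σ_{j<i} t_j p_j`, the upper
integration limit is `c_i = r / t_i`, and after the last step the integrand factor
`[t_d (c_d - p_d)]^M` equals the final remaining mass raised to the power `M`. -/
noncomputable def deFinettiInt (M : ℕ) : List (ℝ × ℕ) → ℝ → ℝ
  | [], r => r ^ M
  | (t, N) :: rest, r =>
      ∫ p in (0:ℝ)..(r / t), (t / r) * p ^ N * deFinettiInt M rest (r - t * p)

/-!
Each integration is a Beta integral, `∫₀^c p^a (c - p)^b dp = a! b! / (a + b + 1)! · c^(a + b + 1)`.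
Since `r - t p = t (r/t - p)`, induction on the list shows that the iterated integral is
homogeneous in the remaining mass `r`: it equals an explicit coefficient times `r ^ S`, where `S`
is the total degree. The coefficient telescopes to
`Π t_j^(-N_j) · multinomial⁻¹ · Π_i (S_i + 1)⁻¹` with partial degrees `S_i ≤ n`, which gives the
bound.
-/

open Nat

theorem integral_pow_mul_sub_pow (a b : ℕ) (c : ℝ) :
    ∫ x in (0 : ℝ)..c, x ^ a * (c - x) ^ b = (a ! * b ! / (a + b + 1)! : ℝ) * c ^ (a + b + 1) := by
  induction b generalizing a with
  | zero =>
    simp only [pow_zero, mul_one, integral_pow, add_zero, factorial_zero, cast_one]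
    rw [factorial_succ]
    push_cast
    field_simp
    simp
  | succ b ih =>
    -- integrate `(c - x) ^ (b + 1)` against `d/dx (x ^ (a + 1) / (a + 1))`; the boundary terms vanish
    have hparts : ∫ x in (0 : ℝ)..c, (c - x) ^ (b + 1) * x ^ a
        = (b + 1) / (a + 1) * ∫ x in (0 : ℝ)..c, x ^ (a + 1) * (c - x) ^ b := by
      rw [intervalIntegral.integral_mul_deriv_eq_deriv_mul
        (u' := fun x => -((b + 1) * (c - x) ^ b)) (v := fun x => x ^ (a + 1) / (a + 1))]
      · simp only [sub_self, sub_zero, zero_sub, ne_eq, add_eq_zero, one_ne_zero, and_false,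
          not_false_eq_true, zero_pow, zero_mul, zero_div, mul_zero,
          ← intervalIntegral.integral_neg, ← intervalIntegral.integral_const_mul]
        congr 1 with x
        ring
      · intro x _
        simpa using ((hasDerivAt_id x).const_sub c).fun_pow (b + 1)
      · intro x _
        convert (hasDerivAt_pow (a + 1) x).div_const ((a : ℝ) + 1) using 1
        simp only [Nat.add_sub_cancel, Nat.cast_add, Nat.cast_one]
        field_simp
      · exact (by fun_prop : Continuous fun x : ℝ => -((b + 1) * (c - x) ^ b)).intervalIntegrable _ _
      · exact (continuous_pow a).intervalIntegrable _ _
    simp_rw [mul_comm (_ ^ a)]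
    rw [hparts, ih, show a + 1 + b + 1 = a + (b + 1) + 1 by ring, factorial_succ a,
      factorial_succ b]
    push_cast
    field_simp

theorem factorial_mul_factorial_div_mul_inv_le {a b n : ℕ} (h : a + b ≤ n) :
    (a ! * b ! / (a + b)! : ℝ) * ((n : ℝ) + 1)⁻¹ ≤ a ! * b ! / (a + b + 1)! := by
  rw [← div_eq_mul_inv, div_div, factorial_succ, cast_mul, mul_comm ((a + b)! : ℝ)]
  gcongr
  exact_mod_cast Nat.succ_le_succ h

theorem inv_multinomial_eq {K ι : Type*} [Field K] [CharZero K] (s : Finset ι) (f : ι → ℕ) :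
    (Nat.multinomial s f : K)⁻¹ = (∏ i ∈ s, ((f i)! : K)) / (∑ i ∈ s, f i)! := by
  have hm : (Nat.multinomial s f : K) ≠ 0 := Nat.cast_ne_zero.mpr (Nat.multinomial_pos s f).ne'
  rw [eq_div_iff (Nat.cast_ne_zero.mpr (factorial_ne_zero _)), ← Nat.multinomial_spec s f]
  push_cast
  field_simp

@[to_additive]
theorem prod_map_list_range {β : Type*} [CommMonoid β] (f : ℕ → β) (d : ℕ) :
    ((List.range d).map f).prod = ∏ j ∈ Finset.range d, f j := by
  rw [Finset.prod_eq_multiset_prod, Finset.range_val, Multiset.range, Multiset.map_coe,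
    Multiset.prod_coe]

def deFinettiDeg (M : ℕ) (L : List (ℝ × ℕ)) : ℕ := (L.map Prod.snd).sum + M

theorem deFinettiDeg_cons (M N : ℕ) (t : ℝ) (L : List (ℝ × ℕ)) :
    deFinettiDeg M ((t, N) :: L) = N + deFinettiDeg M L := by
  simp only [deFinettiDeg, List.map_cons, List.sum_cons]
  ring

noncomputable def deFinettiCoeff (M : ℕ) : List (ℝ × ℕ) → ℝ
  | [] => 1
  | (t, N) :: rest =>
      t⁻¹ ^ N * (N ! * (deFinettiDeg M rest)! / (N + deFinettiDeg M rest + 1)! : ℝ) *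
        deFinettiCoeff M rest

theorem deFinettiCoeff_nonneg (M : ℕ) (L : List (ℝ × ℕ)) (hL : ∀ p ∈ L, 0 ≤ p.1) :
    0 ≤ deFinettiCoeff M L := by
  induction L with
  | nil => simp [deFinettiCoeff]
  | cons head rest ih =>
    have := hL head List.mem_cons_self
    have := ih fun p hp => hL p (List.mem_cons_of_mem _ hp)
    simp only [deFinettiCoeff]
    positivity

theorem deFinettiInt_eq_coeff_mul_pow (M : ℕ) (L : List (ℝ × ℕ)) (hL : ∀ p ∈ L, 0 < p.1)
    {r : ℝ} (hr : 0 < r) :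
    deFinettiInt M L r = deFinettiCoeff M L * r ^ deFinettiDeg M L := by
  induction L generalizing r with
  | nil => simp [deFinettiInt, deFinettiCoeff, deFinettiDeg]
  | cons head rest ih =>
    obtain ⟨t, N⟩ := head
    have ht : 0 < t := hL (t, N) List.mem_cons_self
    have hc : 0 < r / t := by positivity
    -- the induction hypothesis needs `0 < r - t * p`, which fails only at the endpoint `p = r / t`
    have hintegrand : Set.EqOn (fun p => t / r * p ^ N * deFinettiInt M rest (r - t * p))
        (fun p => t / r * deFinettiCoeff M rest * t ^ deFinettiDeg M rest *
          (p ^ N * (r / t - p) ^ deFinettiDeg M rest))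
        (Set.Ioo 0 (r / t)) := by
      intro p ⟨_, hp⟩
      have hsub : r - t * p = t * (r / t - p) := by field_simp
      have hpos : 0 < r - t * p := by rw [hsub]; exact mul_pos ht (by linarith)
      simp only
      rw [ih (fun q hq => hL q (List.mem_cons_of_mem _ hq)) hpos, hsub, mul_pow]
      ring
    rw [deFinettiInt, intervalIntegral.integral_congr_Ioo_of_le hc.le hintegrand,
      intervalIntegral.integral_const_mul, integral_pow_mul_sub_pow, deFinettiDeg_cons,
      deFinettiCoeff]
    simp only [div_pow, inv_pow, pow_add, pow_one]
    field_simp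

theorem le_deFinettiCoeff (M n : ℕ) (L : List (ℝ × ℕ)) (hL : ∀ p ∈ L, 0 ≤ p.1)
    (hn : deFinettiDeg M L ≤ n) :
    (L.map fun p => p.1⁻¹ ^ p.2).prod * (M ! * (L.map fun p => (p.2 ! : ℝ)).prod /
      (deFinettiDeg M L)!) * ((n : ℝ) + 1)⁻¹ ^ L.length ≤ deFinettiCoeff M L := by
  induction L with
  | nil => simp [deFinettiCoeff, deFinettiDeg, factorial_ne_zero]
  | cons head rest ih =>
    obtain ⟨t, N⟩ := head
    have ht : 0 ≤ t := hL (t, N) List.mem_cons_self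
    have hrest : ∀ p ∈ rest, 0 ≤ p.1 := fun p hp => hL p (List.mem_cons_of_mem _ hp)
    rw [deFinettiDeg_cons] at hn ⊢
    set m := deFinettiDeg M rest
    calc _ = t⁻¹ ^ N * (N ! * m ! / (N + m)! * ((n : ℝ) + 1)⁻¹) *
          ((rest.map fun p => p.1⁻¹ ^ p.2).prod * (M ! * (rest.map fun p => (p.2 ! : ℝ)).prod /
            m !) * ((n : ℝ) + 1)⁻¹ ^ rest.length) := by
          simp only [List.map_cons, List.prod_cons, List.length_cons, pow_succ]
          field_simp
      _ ≤ t⁻¹ ^ N * (N ! * m ! / (N + m)! * ((n : ℝ) + 1)⁻¹) * deFinettiCoeff M rest := by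
          gcongr
          exact ih hrest (by omega)
      _ ≤ t⁻¹ ^ N * (N ! * m ! / (N + m + 1)! : ℝ) * deFinettiCoeff M rest := by
          gcongr
          · exact deFinettiCoeff_nonneg M rest hrest
          · exact factorial_mul_factorial_div_mul_inv_le hn

/-- Indices are 0-based: `t 0, …, t d` and `N 0, …, N d` play the roles of `t₁, …, t_{d+1}` and
`N₁, …, N_{d+1}`, so the exponent of the last factor is `N d = n - Σ_{j<d} N j`. -/
theorem deFinetti_iterated_integral_lower_bound (d n : ℕ) (t : ℕ → ℕ) (N : ℕ → ℕ)
    (ht : ∀ j, 0 < t j)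
    (hsum : ∑ j ∈ Finset.range (d + 1), N j = n) :
    (∏ j ∈ Finset.range d, ((t j : ℝ))⁻¹ ^ (N j)) *
        ((Nat.multinomial (Finset.range (d + 1)) N : ℝ))⁻¹ * (((n : ℝ) + 1))⁻¹ ^ d ≤
      deFinettiInt (N d) ((List.range d).map (fun j => ((t j : ℝ), N j))) 1 := by
  set L := (List.range d).map fun j => ((t j : ℝ), N j)
  have hL : ∀ p ∈ L, 0 < p.1 := by simp [L, ht]
  have hdeg : deFinettiDeg (N d) L = n := by
    rw [← hsum, Finset.sum_range_succ, deFinettiDeg, List.map_map, ← sum_map_list_range]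
    rfl
  rw [deFinettiInt_eq_coeff_mul_pow _ L hL one_pos, one_pow, mul_one]
  refine le_of_eq_of_le ?_ (le_deFinettiCoeff (N d) n L (fun p hp => (hL p hp).le) hdeg.le)
  rw [hdeg, inv_multinomial_eq, hsum, Finset.prod_range_succ]
  simp only [L, List.map_map, Function.comp_def, prod_map_list_range, List.length_map,
    List.length_range]
  ring
end

section
/- Under the hypotheses of the general de Finetti reduction—P a permutation invariant conditional probability distribution on A^n × X^n with symmetry S encoded by a single-party state Q with parameters p₁,…,p_d appearing t₁,…,t_d times per input vector and unfree entry appearing t_{d+1} times—the pointwise upper bound P(a|x) ≤ Π_{j=1}^{d+1} (1/t_j)^{N_j} · multinomial(n; N₁,…,N_{d+1})⁻¹ holds, where N_j is the number of coordinates i with color j under the coloring induced by Q. -/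
/-!
Fix the inputs `x` and colour each coordinate `i` of an output string `ã` by `col (x i) (ã i)`.
If `ã` has the same colour counts `N` as `a`, some permutation of the coordinates carries the
colouring of `a` to that of `ã`; permutation invariance and the colour symmetry then give
`P ã x = P a x`. By orbit-stabilizer for `Perm (Fin n)` acting on colourings, whose stabilizer is
the product of the symmetric groups of the colour classes, there are `multinomial N` colourings
with counts `N`, and each is realised by `∏ j, t j ^ N j` strings. These strings all have
probability `P a x` and their total probability is at most `1`.
-/

open Finset MulAction

section FiberCard

variable {α ι : Type*} [Fintype α] [DecidableEq ι]

def fiberCard (c : α → ι) (j : ι) : ℕ := #{i | c i = j}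

lemma fiberCard_comp_perm (c : α → ι) (σ : Equiv.Perm α) : fiberCard (c ∘ σ) = fiberCard c :=
  funext fun _ => card_equiv σ (by simp)

lemma sum_fiberCard [Fintype ι] (c : α → ι) : ∑ j, fiberCard c j = Fintype.card α :=
  (card_eq_sum_card_fiberwise fun i _ => mem_univ (c i)).symm

lemma prod_comp_eq_prod_pow_fiberCard [Fintype ι] {M : Type*} [CommMonoid M]
    (f : ι → M) (c : α → ι) : ∏ i, f (c i) = ∏ j, f j ^ fiberCard c j := by
  simp_rw [fiberCard, ← prod_const]
  exact (prod_fiberwise_of_maps_to' (fun i _ => mem_univ (c i)) f).symm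

lemma exists_perm_comp_eq_of_fiberCard_eq {c c' : α → ι} (h : fiberCard c = fiberCard c') :
    ∃ σ : Equiv.Perm α, c ∘ σ = c' := by
  have e : ∀ j, {i // c' i = j} ≃ {i // c i = j} := fun j =>
    Fintype.equivOfCardEq <| by simpa [Fintype.card_subtype, fiberCard] using (congrFun h j).symm
  exact ⟨Equiv.ofFiberEquiv e, funext (Equiv.ofFiberEquiv_map e)⟩

lemma orbit_domMulAct_eq (c : α → ι) :
    orbit (Equiv.Perm α)ᵈᵐᵃ c = {c' | fiberCard c' = fiberCard c} := by
  ext c'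
  constructor
  · rintro ⟨g, rfl⟩
    exact fiberCard_comp_perm c (DomMulAct.mk.symm g)
  · intro h
    obtain ⟨σ, rfl⟩ := exists_perm_comp_eq_of_fiberCard_eq h.symm
    exact ⟨DomMulAct.mk σ, rfl⟩

theorem card_filter_fiberCard_eq_multinomial [Fintype ι] [DecidableEq α] (c : α → ι) :
    #{c' : α → ι | fiberCard c' = fiberCard c} = Nat.multinomial univ (fiberCard c) := by
  have orbit_stabilizer :
      Nat.card (orbit (Equiv.Perm α)ᵈᵐᵃ c) * Nat.card (stabilizer (Equiv.Perm α)ᵈᵐᵃ c)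
        = Nat.card (Equiv.Perm α)ᵈᵐᵃ := by
    rw [← Nat.card_prod, Nat.card_congr (orbitProdStabilizerEquivGroup _ c)]
  have card_orbit : Nat.card (orbit (Equiv.Perm α)ᵈᵐᵃ c)
      = #{c' : α → ι | fiberCard c' = fiberCard c} := by
    rw [orbit_domMulAct_eq, ← coe_filter_univ, Nat.card_coe_set_eq, Set.ncard_coe_finset]
  have card_stabilizer :
      Nat.card (stabilizer (Equiv.Perm α)ᵈᵐᵃ c) = ∏ j, (fiberCard c j).factorial := by
    rw [Nat.card_congr (Equiv.subtypeEquiv (q := fun g : Equiv.Perm α => c ∘ g = c)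
      DomMulAct.mk.symm fun _ => DomMulAct.mem_stabilizer_iff),
      Nat.card_eq_fintype_card, DomMulAct.stabilizer_card]
    simp only [Fintype.card_subtype, fiberCard]
  have card_group : Nat.card (Equiv.Perm α)ᵈᵐᵃ = (∑ j, fiberCard c j).factorial := by
    rw [sum_fiberCard, ← Nat.card_congr DomMulAct.mk, Nat.card_eq_fintype_card, Fintype.card_perm]
  rw [card_orbit, card_stabilizer, card_group, ← Nat.multinomial_spec, mul_comm] at orbit_stabilizer
  exact Nat.eq_of_mul_eq_mul_left (prod_pos fun j _ => Nat.factorial_pos _) orbit_stabilizer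

lemma card_filter_coordwise_eq_prod {β : Type*} [Fintype β] [DecidableEq α] (g : α → β → ι) (c : α → ι) :
    #{a : α → β | (fun i => g i (a i)) = c} = ∏ i, #{b | g i b = c i} := by
  rw [← Fintype.card_piFinset]
  congr 1
  ext a
  simp [funext_iff]

theorem card_filter_fiberCard_coordwise_eq {β : Type*} [Fintype β] [Fintype ι] [DecidableEq α]
    (g : α → β → ι) (t : ι → ℕ) (ht : ∀ i j, #{b | g i b = j} = t j) (c : α → ι) :
    #{a : α → β | fiberCard (fun i => g i (a i)) = fiberCard c}
      = Nat.multinomial univ (fiberCard c) * ∏ j, t j ^ fiberCard c j := by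
  set S : Finset (α → β) := {a | fiberCard (fun i => g i (a i)) = fiberCard c}
  set T : Finset (α → ι) := {c' | fiberCard c' = fiberCard c}
  have maps_to : ∀ a ∈ S, (fun i => g i (a i)) ∈ T := fun a ha => by simpa [S, T] using ha
  have fiber_card : ∀ c' ∈ T, #{a ∈ S | (fun i => g i (a i)) = c'} = ∏ j, t j ^ fiberCard c j := by
    intro c' hc'
    rw [mem_filter] at hc'
    calc _ = #{a : α → β | (fun i => g i (a i)) = c'} := by
          congr 1; ext a; simp only [S, mem_filter, mem_univ, true_and, and_iff_right_iff_imp]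
          rintro rfl; exact hc'.2
      _ = ∏ j, t j ^ fiberCard c' j := by
          simp_rw [card_filter_coordwise_eq_prod, ht, prod_comp_eq_prod_pow_fiberCard]
      _ = _ := by rw [hc'.2]
  rw [card_eq_sum_card_fiberwise maps_to, sum_congr rfl fiber_card, sum_const, smul_eq_mul,
    card_filter_fiberCard_eq_multinomial]

end FiberCard

section ColorSymmetric

variable {α β γ ι R : Type*} [Fintype α] [DecidableEq α] (P : (α → β) → (α → γ) → R)
  (col : γ → β → ι)

lemma eq_of_forall_col_eq
    (hsym : ∀ (a : α → β) (x : α → γ) (i : α) (a' : β) (x' : γ),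
      col (x i) (a i) = col x' a' → P (Function.update a i a') (Function.update x i x') = P a x)
    {a a' : α → β} {x x' : α → γ} (h : ∀ i, col (x i) (a i) = col (x' i) (a' i)) :
    P a' x' = P a x := by
  suffices ∀ s : Finset α, P (s.piecewise a' a) (s.piecewise x' x) = P a x by
    simpa using this univ
  intro s
  induction s using Finset.induction_on with
  | empty => simp
  | insert k s hk ih =>
    rw [piecewise_insert, piecewise_insert, hsym _ _ k _ _ (by simpa [hk] using h k), ih]

lemma eq_of_fiberCard_col_eq [DecidableEq ι]
    (hperm : ∀ (π : Equiv.Perm α) a x, P (a ∘ π) (x ∘ π) = P a x)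
    (hsym : ∀ (a : α → β) (x : α → γ) (i : α) (a' : β) (x' : γ),
      col (x i) (a i) = col x' a' → P (Function.update a i a') (Function.update x i x') = P a x)
    {a a' : α → β} {x : α → γ}
    (h : fiberCard (fun i => col (x i) (a i)) = fiberCard (fun i => col (x i) (a' i))) :
    P a' x = P a x := by
  obtain ⟨σ, hσ⟩ := exists_perm_comp_eq_of_fiberCard_eq h
  rw [eq_of_forall_col_eq P col hsym (a := a ∘ σ) (x := x ∘ σ) (congrFun hσ), hperm]

end ColorSymmetric

/-- Upper bound on permutation invariant states with symmetry `S` (Lemma on upper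
bounding): the symmetry is encoded by a coloring `col` of single-party (input, output)
pairs with `d+1` colors (colors `0,…,d-1` for the free parameters `p₁,…,p_d` and color `d`
for the unfree entry), each color `j` appearing exactly `t j` times in every input vector.
If changing one coordinate to a pair of the same color leaves `P` unchanged and `P` is
permutation invariant, then
`P(a|x) ≤ Π_j (1/t_j)^{N_j} · multinomial(n; N₀,…,N_d)⁻¹`
where `N_j` is the number of coordinates of color `j`. -/
theorem symmetric_state_upper_bound (n m l d : ℕ)
    (P : (Fin n → Fin l) → (Fin n → Fin m) → ℝ)
    (col : Fin m → Fin l → Fin (d + 1))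
    (t : Fin (d + 1) → ℕ)
    (hpos : ∀ a x, 0 ≤ P a x)
    (hsum : ∀ x, ∑ a : Fin n → Fin l, P a x = 1)
    (hperm : ∀ (π : Equiv.Perm (Fin n)) a x, P (a ∘ π) (x ∘ π) = P a x)
    (hcount : ∀ (x₁ : Fin m) (j : Fin (d + 1)),
      (Finset.univ.filter (fun a₁ : Fin l => col x₁ a₁ = j)).card = t j)
    (hsym : ∀ (a : Fin n → Fin l) (x : Fin n → Fin m) (i : Fin n) (a' : Fin l) (x' : Fin m),
      col (x i) (a i) = col x' a' →
      P (Function.update a i a') (Function.update x i x') = P a x)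
    (a : Fin n → Fin l) (x : Fin n → Fin m) :
    P a x ≤ (∏ j : Fin (d + 1),
        ((t j : ℝ))⁻¹ ^ ((Finset.univ.filter (fun i => col (x i) (a i) = j)).card)) *
      ((Nat.multinomial Finset.univ
        (fun j : Fin (d + 1) =>
          (Finset.univ.filter (fun i => col (x i) (a i) = j)).card) : ℝ))⁻¹ := by
  set N := fiberCard fun i => col (x i) (a i)
  set S : Finset (Fin n → Fin l) := {a' | fiberCard (fun i => col (x i) (a' i)) = N}
  have card_S : #S = Nat.multinomial univ N * ∏ j, t j ^ N j :=
    card_filter_fiberCard_coordwise_eq (fun i => col (x i)) t (fun i => hcount (x i)) _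
  have eq_on_S : ∀ a' ∈ S, P a' x = P a x := fun a' ha' =>
    eq_of_fiberCard_col_eq P col hperm hsym (mem_filter.1 ha').2.symm
  have card_mul_le : (#S : ℝ) * P a x ≤ 1 := calc
    (#S : ℝ) * P a x = ∑ a' ∈ S, P a' x := by rw [sum_congr rfl eq_on_S, sum_const, nsmul_eq_mul]
    _ ≤ ∑ a', P a' x := sum_le_sum_of_subset_of_nonneg (subset_univ S) fun b _ _ => hpos b x
    _ = 1 := hsum x
  have a_mem : a ∈ S := mem_filter.2 ⟨mem_univ a, rfl⟩
  have S_pos : (0 : ℝ) < #S := by exact_mod_cast card_pos.2 ⟨a, a_mem⟩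
  change P a x ≤ (∏ j, (t j : ℝ)⁻¹ ^ N j) * (Nat.multinomial univ N : ℝ)⁻¹
  have bound_eq : (∏ j, (t j : ℝ)⁻¹ ^ N j) * (Nat.multinomial univ N : ℝ)⁻¹ = (#S : ℝ)⁻¹ := by
    rw [card_S]
    push_cast
    rw [mul_inv, mul_comm, ← prod_inv_distrib]
    simp_rw [inv_pow]
  rw [bound_eq, ← one_div, le_div_iff₀' S_pos]
  exact card_mul_le
end
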